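/- Let $R_n = \mathbb{F}_2[x_\alpha \mid \alpha \in (\mathbb{Z}/2)^n \setminus \{0\}]/(x_\alpha x_\beta + x_\alpha x_\gamma + x_\beta x_\gamma \mid \alpha+\beta+\gamma=0)$, graded with each $x_\alpha$ in degree $1$. Then the monomials $\prod_{s \in S} x_s^{r_s}$ with $r_s \geq 1$, where $S$ ranges over linearly independent subsets of $(\mathbb{Z}/2)^n \setminus \{0\}$ in row echelon form with respect to reversed column order (including the empty monomial $1$), form an $\mathbb{F}_2$-vector space basis of $R_n$. -/

import Mathlib

open MvPolynomial

/-- Nonzero elements of `(ℤ/2)^n`. -/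
abbrev Vn (n : ℕ) := {v : Fin n → ZMod 2 // v ≠ 0}

/-- The ideal of relations `x_α x_β + x_α x_γ + x_β x_γ` for nonzero `α+β+γ = 0`. -/
noncomputable def relIdeal (n : ℕ) : Ideal (MvPolynomial (Vn n) (ZMod 2)) :=
  Ideal.span {p | ∃ a b c : Vn n, (a : Fin n → ZMod 2) + b + c = 0 ∧
    p = X a * X b + X a * X c + X b * X c}

/-- The position of the last nonzero coordinate ("pivot", with respect to reversed column
order) of a vector in `(ℤ/2)^n`. -/
noncomputable def pivot (n : ℕ) (v : Fin n → ZMod 2) : WithBot (Fin n) :=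
  (Finset.univ.filter fun i => v i ≠ 0).max

/-- A finite set of nonzero vectors is in (not necessarily reduced) row echelon form with
respect to reversed column order iff its elements have pairwise distinct pivots; this is
exactly the inductively defined family `F_n` of the paper (its members are linearly
independent). -/
def Echelon (n : ℕ) (S : Finset (Vn n)) : Prop :=
  Set.InjOn (fun v : Vn n => pivot n (v : Fin n → ZMod 2)) ↑S

/-!
Orient every relation as `x_a x_b ↦ x_a x_c + x_b x_c`, where `a` and `b` have the same pivot and
`c = a + b` has a smaller one. A step lowers the sum of the pivots of a monomial and the
irreducible monomials are exactly the echelon ones, so every monomial reduces to a sum `nf m` of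
echelon monomials congruent to it. As in the diamond lemma, `nf` does not depend on the choices
made: steps on disjoint pairs commute, and steps on two pairs `{a, b}`, `{α, b}` with a common
point lead to results that differ by relations along the line `{a + b, α + b, a + α}`, of smaller
weight. Hence the linear extension of `nf` kills the ideal of relations and fixes the echelon
monomials, which are therefore independent in `R_n`.
-/

section Pivot

variable {n : ℕ} {v w : Fin n → ZMod 2} {i : Fin n}

lemma pivot_eq_bot_iff : pivot n v = ⊥ ↔ v = 0 := by
  simp [pivot, Finset.max_eq_bot, Finset.filter_eq_empty_iff, funext_iff]

lemma le_pivot (h : v i ≠ 0) : (i : WithBot (Fin n)) ≤ pivot n v :=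
  Finset.le_max (by simpa using h)

lemma apply_ne_zero_of_pivot_eq (h : pivot n v = i) : v i ≠ 0 := by
  simpa using Finset.mem_of_max h

lemma pivot_add_le : pivot n (v + w) ≤ max (pivot n v) (pivot n w) := by
  refine Finset.max_le fun i hi => ?_
  by_cases hv : v i = 0
  · exact le_max_of_le_right (le_pivot (by simpa [hv] using hi))
  · exact le_max_of_le_left (le_pivot hv)

lemma pivot_add_of_lt (h : pivot n w < pivot n v) : pivot n (v + w) = pivot n v := by
  obtain ⟨i, hi⟩ := WithBot.ne_bot_iff_exists.mp h.ne_bot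
  have hwi : w i = 0 := by
    by_contra hw
    exact (le_pivot hw).not_gt (hi ▸ h)
  refine le_antisymm (pivot_add_le.trans (max_eq_left h.le).le) (hi ▸ le_pivot ?_)
  simpa [hwi] using apply_ne_zero_of_pivot_eq hi.symm

lemma pivot_add_lt (h : pivot n v = pivot n w) (hne : v ≠ w) : pivot n (v + w) < pivot n v := by
  have hv : pivot n v ≠ ⊥ := fun hv => hne <| by
    rw [pivot_eq_bot_iff.mp hv, pivot_eq_bot_iff.mp (h.symm.trans hv)]
  obtain ⟨i, hi⟩ := WithBot.ne_bot_iff_exists.mp hv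
  have hvi := apply_ne_zero_of_pivot_eq hi.symm
  have hwi := apply_ne_zero_of_pivot_eq (h ▸ hi.symm)
  refine (pivot_add_le.trans (by rw [← h, max_self])).lt_of_ne fun h' => ?_
  have two_units : ∀ x y : ZMod 2, x ≠ 0 → y ≠ 0 → x + y = 0 := by decide
  exact apply_ne_zero_of_pivot_eq (h'.trans hi.symm) (two_units _ _ hvi hwi)

end Pivot

open Finsupp (single)

lemma Finsupp.exists_eq_add_single_of_add_single_eq {α : Type*} {τ σ : α →₀ ℕ} {a b : α}
    (h : τ + single a 1 = σ + single b 1) (hab : a ≠ b) :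
    ∃ ρ, τ = ρ + single b 1 ∧ σ = ρ + single a 1 := by
  have hb : single b 1 ≤ τ := by
    have := congr($h b)
    simp only [Finsupp.add_apply, Finsupp.single_eq_same, Finsupp.single_eq_of_ne hab.symm] at this
    exact Finsupp.single_le_iff.mpr (by omega)
  refine ⟨τ - single b 1, (tsub_add_cancel_of_le hb).symm,
    add_right_cancel (b := single b 1) ?_⟩
  rw [← h, add_right_comm, tsub_add_cancel_of_le hb]

lemma Finsupp.exists_eq_add_single_add_single_of_disjoint {α : Type*} {τ σ : α →₀ ℕ}
    {a b a' b' : α}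
    (h : τ + single a 1 + single b 1 = σ + single a' 1 + single b' 1)
    (haa' : a ≠ a') (hab' : a ≠ b') (hba' : b ≠ a') (hbb' : b ≠ b') :
    ∃ ρ, τ = ρ + single a' 1 + single b' 1 ∧ σ = ρ + single a 1 + single b 1 := by
  obtain ⟨ρ₁, h₁, h₁'⟩ := exists_eq_add_single_of_add_single_eq h hbb'
  obtain ⟨ρ₂, rfl, rfl⟩ := exists_eq_add_single_of_add_single_eq h₁ hab'
  rw [add_right_comm] at h₁'
  obtain ⟨ρ₃, rfl, h₃⟩ := exists_eq_add_single_of_add_single_eq h₁' haa'.symm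
  obtain ⟨ρ, rfl, rfl⟩ := exists_eq_add_single_of_add_single_eq h₃ hba'
  exact ⟨ρ, rfl, add_right_comm _ _ _⟩

variable {n : ℕ}

lemma pivot_ne_bot (v : Vn n) : pivot n v.1 ≠ ⊥ :=
  pivot_eq_bot_iff.not.mpr v.2

noncomputable def pv (v : Vn n) : Fin n :=
  (pivot n v.1).unbot (pivot_ne_bot v)

lemma coe_pv (v : Vn n) : (pv v : WithBot (Fin n)) = pivot n v.1 :=
  WithBot.coe_unbot _ _

lemma echelon_iff_injOn_pv {S : Finset (Vn n)} : Echelon n S ↔ Set.InjOn pv (S : Set (Vn n)) := by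
  simp only [Echelon, Set.InjOn, ← coe_pv, WithBot.coe_inj]

def IsLine (a b c : Vn n) : Prop := (a : Fin n → ZMod 2) + b + c = 0

namespace IsLine

variable {a b c : Vn n}

lemma val_eq (h : IsLine a b c) : (c : Fin n → ZMod 2) = a + b := by
  have key : ∀ x y z : ZMod 2, x + y + z = 0 → z = x + y := by decide
  exact funext fun i => key _ _ _ (congrFun h i)

lemma of_val_eq (h : (c : Fin n → ZMod 2) = a + b) : IsLine a b c := by
  have key : ∀ x y : ZMod 2, x + y + (x + y) = 0 := by decide
  exact funext fun i => by simpa [h] using key (a.1 i) (b.1 i)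

lemma symm (h : IsLine a b c) : IsLine b a c :=
  of_val_eq (h.val_eq.trans (add_comm _ _))

lemma rotate (h : IsLine a b c) : IsLine b c a :=
  (by abel : (b : Fin n → ZMod 2) + c + a = a + b + c).trans h

lemma ne (h : IsLine a b c) : a ≠ b := by
  rintro rfl
  have key : ∀ x : ZMod 2, x + x = 0 := by decide
  exact c.2 (h.val_eq.trans (funext fun i => key _))

lemma unique {c' : Vn n} (h : IsLine a b c) (h' : IsLine a b c') : c = c' :=
  Subtype.ext (h.val_eq.trans h'.val_eq.symm)

lemma pv_lt (h : IsLine a b c) (hab : pv a = pv b) : pv c < pv a := by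
  rw [← WithBot.coe_lt_coe, coe_pv, coe_pv, h.val_eq]
  exact pivot_add_lt (by rw [← coe_pv, ← coe_pv, hab]) (Subtype.coe_ne_coe.mpr h.ne)

lemma pv_eq_of_lt (h : IsLine a b c) (hba : pv b < pv a) : pv c = pv a := by
  rw [← WithBot.coe_inj, coe_pv, coe_pv, h.val_eq]
  exact pivot_add_of_lt (by rw [← coe_pv, ← coe_pv]; exact WithBot.coe_lt_coe.mpr hba)

end IsLine

lemma exists_isLine {a b : Vn n} (h : a ≠ b) : ∃ c, IsLine a b c := by
  have hne : (a : Fin n → ZMod 2) + b ≠ 0 := fun h0 => h <| Subtype.ext <| by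
    have key : ∀ x y : ZMod 2, x + y = 0 → x = y := by decide
    exact funext fun i => key _ _ (congrFun h0 i)
  exact ⟨⟨_, hne⟩, IsLine.of_val_eq rfl⟩

noncomputable def pivotWeight : (Vn n →₀ ℕ) →+ ℕ :=
  Finsupp.weight fun v => (pv v : ℕ)

@[simp]
lemma pivotWeight_add_single (τ : Vn n →₀ ℕ) (v : Vn n) :
    pivotWeight (τ + single v 1) = pivotWeight τ + pv v := by
  simp [pivotWeight, Finsupp.weight_single]

/-- A reduction step `τ x_a x_b ↦ τ x_a x_c + τ x_b x_c` applicable to the monomial `m`. -/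
structure Redex (m : Vn n →₀ ℕ) where
  rest : Vn n →₀ ℕ
  a : Vn n
  b : Vn n
  c : Vn n
  eq_add : m = rest + single a 1 + single b 1
  isLine : IsLine a b c
  pv_eq : pv a = pv b

namespace Redex

variable {m : Vn n →₀ ℕ} (r : Redex m)

noncomputable def left : Vn n →₀ ℕ := r.rest + single r.a 1 + single r.c 1

noncomputable def right : Vn n →₀ ℕ := r.rest + single r.b 1 + single r.c 1

def swap : Redex m where
  rest := r.rest
  a := r.b
  b := r.a
  c := r.c
  eq_add := r.eq_add.trans (add_right_comm _ _ _)
  isLine := r.isLine.symm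
  pv_eq := r.pv_eq.symm

lemma pivotWeight_left_lt : pivotWeight r.left < pivotWeight m := by
  have hc : (pv r.c : ℕ) < pv r.b := (r.isLine.pv_lt r.pv_eq).trans_eq r.pv_eq
  have hm := congrArg pivotWeight r.eq_add
  simp only [left, pivotWeight_add_single] at hm ⊢
  omega

lemma pivotWeight_right_lt : pivotWeight r.right < pivotWeight m :=
  r.swap.pivotWeight_left_lt

end Redex

lemma exists_eq_add_single {m : Vn n →₀ ℕ} {v : Vn n} (h : v ∈ m.support) :
    ∃ τ, m = τ + single v 1 :=
  ⟨m - single v 1, (tsub_add_cancel_of_le (Finsupp.single_le_iff.mpr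
    (Nat.one_le_iff_ne_zero.mpr (Finsupp.mem_support_iff.mp h)))).symm⟩

lemma nonempty_redex_iff {m : Vn n →₀ ℕ} : Nonempty (Redex m) ↔ ¬ Echelon n m.support := by
  rw [echelon_iff_injOn_pv, Set.InjOn]
  constructor
  · rintro ⟨τ, a, b, c, rfl, hl, hab⟩ hinj
    refine hl.ne (hinj ?_ ?_ hab) <;> simp
  · intro h
    push Not at h
    obtain ⟨a, ha, b, hb, hab, hne⟩ := h
    obtain ⟨σ, rfl⟩ := exists_eq_add_single (Finset.mem_coe.mp hb)
    obtain ⟨τ, rfl⟩ := exists_eq_add_single (m := σ) (v := a)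
      (by simpa [Finsupp.single_apply, hne] using ha)
    obtain ⟨c, hc⟩ := exists_isLine hne
    exact ⟨τ, a, b, c, rfl, hc, hab⟩

open scoped Classical in
noncomputable def nf (m : Vn n →₀ ℕ) : MvPolynomial (Vn n) (ZMod 2) :=
  if h : Nonempty (Redex m) then nf h.some.left + nf h.some.right else monomial m 1
termination_by pivotWeight m
decreasing_by
  · exact h.some.pivotWeight_left_lt
  · exact h.some.pivotWeight_right_lt

lemma nf_of_echelon {m : Vn n →₀ ℕ} (h : Echelon n m.support) : nf m = monomial m 1 := by
  rw [nf, dif_neg (nonempty_redex_iff.not_left.mpr h)]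

def NfSplitsBelow (n K : ℕ) : Prop :=
  ∀ m : Vn n →₀ ℕ, pivotWeight m < K → ∀ r : Redex m, nf m = nf r.left + nf r.right

section Confluence

variable {K : ℕ} (H : NfSplitsBelow n K) {a b c : Vn n}
include H

lemma NfSplitsBelow.split {τ : Vn n →₀ ℕ} (hl : IsLine a b c) (hab : pv a = pv b)
    (hK : pivotWeight τ + pv a + pv b < K) :
    nf (τ + single a 1 + single b 1) =
      nf (τ + single a 1 + single c 1) + nf (τ + single b 1 + single c 1) :=
  H _ (by simpa using hK) ⟨τ, a, b, c, rfl, hl, hab⟩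

lemma NfSplitsBelow.line_sum (hl : IsLine a b c) (m₀ : Vn n →₀ ℕ)
    (ha : pivotWeight m₀ + 2 * pv a < K) (hb : pivotWeight m₀ + 2 * pv b < K)
    (hc : pivotWeight m₀ + 2 * pv c < K) :
    nf (m₀ + single a 1 + single b 1) + nf (m₀ + single a 1 + single c 1) +
      nf (m₀ + single b 1 + single c 1) = 0 := by
  rcases lt_trichotomy (pv a) (pv b) with hlt | heq | hgt
  on_goal 1 =>
    have h := H.split (τ := m₀) hl.rotate (hl.symm.pv_eq_of_lt hlt).symm (by omega)
  on_goal 2 => have h := H.split (τ := m₀) hl heq (by omega)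
  on_goal 3 =>
    have h := H.split (τ := m₀) hl.rotate.rotate.symm (hl.pv_eq_of_lt hgt).symm (by omega)
  all_goals
    abel_nf at h ⊢
    linear_combination (norm := ring_nf) h
    simp [CharTwo.two_eq_zero]

lemma NfSplitsBelow.split_comm_of_overlap {α γ : Vn n} {ρ : Vn n →₀ ℕ} (hc : IsLine a b c)
    (hγ : IsLine α b γ) (hab : pv a = pv b) (hαb : pv α = pv b) (haα : a ≠ α)
    (hK : pivotWeight ρ + 3 * pv b ≤ K) :
    nf (ρ + single α 1 + single a 1 + single c 1) +
        nf (ρ + single α 1 + single b 1 + single c 1) =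
      nf (ρ + single a 1 + single α 1 + single γ 1) +
        nf (ρ + single a 1 + single b 1 + single γ 1) := by
  obtain ⟨δ, hδ⟩ := exists_isLine haα
  have hcb : (pv c : ℕ) < pv b := (hc.pv_lt hab).trans_eq hab
  have hγb : (pv γ : ℕ) < pv b := (hγ.pv_lt hαb).trans_eq hαb
  have hδb : (pv δ : ℕ) < pv b := (hδ.pv_lt (hab.trans hαb.symm)).trans_eq hab
  have hab' : (pv a : ℕ) = pv b := congrArg Fin.val hab
  have hαb' : (pv α : ℕ) = pv b := congrArg Fin.val hαb
  have hline : IsLine c γ δ := by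
    have key : ∀ x y z : ZMod 2, x + y + (z + y) + (x + z) = 0 := by decide
    rw [IsLine, hc.val_eq, hγ.val_eq, hδ.val_eq]
    exact funext fun i => key (a.1 i) (b.1 i) (α.1 i)
  have h₁ := H.split (τ := ρ + single c 1) hδ (hab.trans hαb.symm) ?_
  have h₂ := H.split (τ := ρ + single c 1) hγ hαb ?_
  have h₃ := H.split (τ := ρ + single γ 1) hδ (hab.trans hαb.symm) ?_
  have h₄ := H.split (τ := ρ + single γ 1) hc hab ?_
  have l₁ := H.line_sum hline (ρ + single α 1) ?_ ?_ ?_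
  have l₂ := H.line_sum hline (ρ + single a 1) ?_ ?_ ?_
  · abel_nf at h₁ h₂ h₃ h₄ l₁ l₂ ⊢
    linear_combination (norm := ring_nf) h₁ + h₂ - h₃ - h₄ + l₁ + l₂
    simp [CharTwo.two_eq_zero]
  all_goals simp only [pivotWeight_add_single]; omega

lemma NfSplitsBelow.split_comm_of_disjoint {α β γ : Vn n} {ρ : Vn n →₀ ℕ}
    (hc : IsLine a b c) (hγ : IsLine α β γ) (hab : pv a = pv b) (hαβ : pv α = pv β)
    (hK : pivotWeight ρ + pv a + pv b + pv α + pv β ≤ K) :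
    nf (ρ + single α 1 + single β 1 + single a 1 + single c 1) +
        nf (ρ + single α 1 + single β 1 + single b 1 + single c 1) =
      nf (ρ + single a 1 + single b 1 + single α 1 + single γ 1) +
        nf (ρ + single a 1 + single b 1 + single β 1 + single γ 1) := by
  have hcb : (pv c : ℕ) < pv b := (hc.pv_lt hab).trans_eq hab
  have hγβ : (pv γ : ℕ) < pv β := (hγ.pv_lt hαβ).trans_eq hαβ
  have h₁ := H.split (τ := ρ + single a 1 + single c 1) hγ hαβ ?_
  have h₂ := H.split (τ := ρ + single b 1 + single c 1) hγ hαβ ?_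
  have h₃ := H.split (τ := ρ + single α 1 + single γ 1) hc hab ?_
  have h₄ := H.split (τ := ρ + single β 1 + single γ 1) hc hab ?_
  · abel_nf at h₁ h₂ h₃ h₄ ⊢
    linear_combination h₁ + h₂ - h₃ - h₄
  all_goals simp only [pivotWeight_add_single]; omega

end Confluence

namespace Redex

variable {m : Vn n →₀ ℕ} {K : ℕ}

lemma nf_swap (r : Redex m) : nf r.swap.left + nf r.swap.right = nf r.left + nf r.right :=
  add_comm _ _

lemma nf_split_eq_of_b_eq (H : NfSplitsBelow n K) (hK : pivotWeight m ≤ K) (r s : Redex m)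
    (hb : r.b = s.b) : nf r.left + nf r.right = nf s.left + nf s.right := by
  obtain ⟨τ, a, b, c, rfl, hc, hab⟩ := r
  obtain ⟨σ, α, b, γ, hm, hγ, hαb⟩ := s
  dsimp only [left, right] at hb ⊢
  subst hb
  have h := add_right_cancel hm
  by_cases haα : a = α
  · subst haα
    obtain rfl := add_right_cancel h
    obtain rfl := hc.unique hγ
    rfl
  · obtain ⟨ρ, rfl, rfl⟩ := Finsupp.exists_eq_add_single_of_add_single_eq h haα
    have hab' : (pv a : ℕ) = pv b := congrArg Fin.val hab
    have hαb' : (pv α : ℕ) = pv b := congrArg Fin.val hαb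
    simp only [pivotWeight_add_single] at hK
    exact H.split_comm_of_overlap hc hγ hab hαb haα (by omega)

lemma nf_split_eq_of_disjoint (H : NfSplitsBelow n K) (hK : pivotWeight m ≤ K) (r s : Redex m)
    (haa : r.a ≠ s.a) (hab : r.a ≠ s.b) (hba : r.b ≠ s.a) (hbb : r.b ≠ s.b) :
    nf r.left + nf r.right = nf s.left + nf s.right := by
  obtain ⟨τ, a, b, c, rfl, hc, hpc⟩ := r
  obtain ⟨σ, α, β, γ, hm, hγ, hpγ⟩ := s
  dsimp only [left, right] at haa hab hba hbb ⊢
  obtain ⟨ρ, rfl, rfl⟩ :=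
    Finsupp.exists_eq_add_single_add_single_of_disjoint hm haa hab hba hbb
  simp only [pivotWeight_add_single] at hK
  exact H.split_comm_of_disjoint hc hγ hpc hpγ (by omega)

lemma nf_split_eq (H : NfSplitsBelow n K) (hK : pivotWeight m ≤ K) (r s : Redex m) :
    nf r.left + nf r.right = nf s.left + nf s.right := by
  by_cases hbb : r.b = s.b
  · exact nf_split_eq_of_b_eq H hK r s hbb
  by_cases hba : r.b = s.a
  · rw [← s.nf_swap]
    exact nf_split_eq_of_b_eq H hK r s.swap hba
  by_cases hab : r.a = s.b
  · rw [← r.nf_swap]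
    exact nf_split_eq_of_b_eq H hK r.swap s hab
  by_cases haa : r.a = s.a
  · rw [← r.nf_swap, ← s.nf_swap]
    exact nf_split_eq_of_b_eq H hK r.swap s.swap haa
  exact nf_split_eq_of_disjoint H hK r s haa hab hba hbb

end Redex

lemma nfSplitsBelow (K : ℕ) : NfSplitsBelow n K := by
  induction K with
  | zero => exact fun m hm => absurd hm (Nat.not_lt_zero _)
  | succ K ih =>
    intro m hm r
    have hr : Nonempty (Redex m) := ⟨r⟩
    rw [nf, dif_pos hr]
    exact hr.some.nf_split_eq ih (Nat.lt_succ_iff.mp hm) r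

theorem nf_line_sum_eq_zero {a b c : Vn n} (hl : IsLine a b c) (τ : Vn n →₀ ℕ) :
    nf (τ + single a 1 + single b 1) + nf (τ + single a 1 + single c 1) +
      nf (τ + single b 1 + single c 1) = 0 :=
  (nfSplitsBelow (pivotWeight τ + 2 * (pv a + pv b + pv c) + 1)).line_sum hl τ
    (by omega) (by omega) (by omega)

lemma monomial_mul_line_relation {σ R : Type*} [CommSemiring R] (τ : σ →₀ ℕ) (a b c : σ) :
    (monomial τ 1 : MvPolynomial σ R) * (X a * X b + X a * X c + X b * X c) =
      monomial (τ + single a 1 + single b 1) 1 + monomial (τ + single a 1 + single c 1) 1 +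
        monomial (τ + single b 1 + single c 1) 1 := by
  simp only [monomial_add_single, pow_one]
  ring

lemma Redex.mk_monomial {m : Vn n →₀ ℕ} (r : Redex m) :
    Ideal.Quotient.mk (relIdeal n) (monomial m 1) =
      Ideal.Quotient.mk (relIdeal n) (monomial r.left 1) +
        Ideal.Quotient.mk (relIdeal n) (monomial r.right 1) := by
  obtain ⟨τ, a, b, c, rfl, hl, -⟩ := r
  rw [← map_add, Ideal.Quotient.eq, CharTwo.sub_eq_add, ← add_assoc]
  dsimp only [Redex.left, Redex.right]
  rw [← monomial_mul_line_relation]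
  exact Ideal.mul_mem_left _ _ (Ideal.subset_span ⟨a, b, c, hl, rfl⟩)

lemma mk_nf (m : Vn n →₀ ℕ) :
    Ideal.Quotient.mk (relIdeal n) (nf m) = Ideal.Quotient.mk (relIdeal n) (monomial m 1) := by
  fun_induction nf m with
  | case1 m h ih₁ ih₂ => rw [map_add, ih₁, ih₂, h.some.mk_monomial]
  | case2 => rfl

variable (n) in
noncomputable def echelonSpan : Submodule (ZMod 2) (MvPolynomial (Vn n) (ZMod 2)) :=
  Submodule.span (ZMod 2)
    (Set.range fun r : {r : Vn n →₀ ℕ // Echelon n r.support} => monomial r.1 1)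

lemma nf_mem_echelonSpan (m : Vn n →₀ ℕ) : nf m ∈ echelonSpan n := by
  fun_induction nf m with
  | case1 m h ih₁ ih₂ => exact add_mem ih₁ ih₂
  | case2 m h =>
    exact Submodule.subset_span ⟨⟨m, not_not.mp (nonempty_redex_iff.not.mp h)⟩, rfl⟩

variable (n) in
noncomputable def nfLin :
    MvPolynomial (Vn n) (ZMod 2) →ₗ[ZMod 2] MvPolynomial (Vn n) (ZMod 2) :=
  (basisMonomials (Vn n) (ZMod 2)).constr (ZMod 2) nf

lemma nfLin_monomial (m : Vn n →₀ ℕ) : nfLin n (monomial m 1) = nf m := by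
  rw [nfLin]
  simpa [coe_basisMonomials] using (basisMonomials (Vn n) (ZMod 2)).constr_basis (ZMod 2) nf m

lemma nfLin_mem_echelonSpan (p : MvPolynomial (Vn n) (ZMod 2)) : nfLin n p ∈ echelonSpan n := by
  have : LinearMap.range (nfLin n) ≤ echelonSpan n := by
    rw [nfLin, Module.Basis.constr_range]
    exact Submodule.span_le.mpr (Set.range_subset_iff.mpr nf_mem_echelonSpan)
  exact this (LinearMap.mem_range_self _ p)

lemma mk_nfLin (p : MvPolynomial (Vn n) (ZMod 2)) :
    Ideal.Quotient.mk (relIdeal n) (nfLin n p) = Ideal.Quotient.mk (relIdeal n) p := by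
  have : (Ideal.Quotient.mkₐ (ZMod 2) (relIdeal n)).toLinearMap ∘ₗ nfLin n =
      (Ideal.Quotient.mkₐ (ZMod 2) (relIdeal n)).toLinearMap :=
    (basisMonomials (Vn n) (ZMod 2)).ext fun m => by
      simpa [coe_basisMonomials, nfLin_monomial] using mk_nf m
  simpa using LinearMap.congr_fun this p

lemma nfLin_mul_line_relation {a b c : Vn n} (hl : IsLine a b c)
    (q : MvPolynomial (Vn n) (ZMod 2)) :
    nfLin n (q * (X a * X b + X a * X c + X b * X c)) = 0 := by
  have : nfLin n ∘ₗ LinearMap.mulRight (ZMod 2) (X a * X b + X a * X c + X b * X c) = 0 :=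
    (basisMonomials (Vn n) (ZMod 2)).ext fun τ => by
      simpa [coe_basisMonomials, monomial_mul_line_relation, nfLin_monomial]
        using nf_line_sum_eq_zero hl τ
  exact LinearMap.congr_fun this q

lemma nfLin_eq_zero_of_mem {p : MvPolynomial (Vn n) (ZMod 2)} (hp : p ∈ relIdeal n) :
    nfLin n p = 0 := by
  suffices ∀ q, nfLin n (q * p) = 0 by simpa using this 1
  induction hp using Submodule.span_induction with
  | mem x hx =>
    obtain ⟨a, b, c, hl, rfl⟩ := hx
    exact nfLin_mul_line_relation hl
  | zero => simp
  | add x y _ _ hx hy => exact fun q => by rw [mul_add, map_add, hx, hy, add_zero]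
  | smul r x _ hx => exact fun q => by rw [smul_eq_mul, ← mul_assoc, hx]

lemma linearIndependent_mk_monomial :
    LinearIndependent (ZMod 2) fun r : {r : Vn n →₀ ℕ // Echelon n r.support} =>
      Ideal.Quotient.mk (relIdeal n) (monomial r.1 (1 : ZMod 2)) := by
  let f := ((relIdeal n).restrictScalars (ZMod 2)).liftQ (nfLin n)
    (fun _ hp => nfLin_eq_zero_of_mem hp) ∘ₗ
      (Submodule.Quotient.restrictScalarsEquiv (ZMod 2) (relIdeal n)).symm.toLinearMap
  refine LinearIndependent.of_comp f ?_
  have hf : ∀ r : {r : Vn n →₀ ℕ // Echelon n r.support},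
      f (Ideal.Quotient.mk (relIdeal n) (monomial r.1 1)) = monomial r.1 1 := fun r => by
    change nfLin n (monomial r.1 1) = _
    rw [nfLin_monomial, nf_of_echelon r.2]
  simp only [Function.comp_def, hf]
  simpa [Function.comp_def, coe_basisMonomials] using
    (basisMonomials (Vn n) (ZMod 2)).linearIndependent.comp Subtype.val Subtype.val_injective

lemma top_le_span_mk_monomial :
    ⊤ ≤ Submodule.span (ZMod 2)
      (Set.range fun r : {r : Vn n →₀ ℕ // Echelon n r.support} =>
        Ideal.Quotient.mk (relIdeal n) (monomial r.1 (1 : ZMod 2))) := by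
  rintro x -
  obtain ⟨p, rfl⟩ := Ideal.Quotient.mk_surjective x
  have h : echelonSpan n ≤ (Submodule.span (ZMod 2) (Set.range fun r : {r : Vn n →₀ ℕ //
      Echelon n r.support} => Ideal.Quotient.mk (relIdeal n) (monomial r.1 (1 : ZMod 2)))).comap
      (Ideal.Quotient.mkₐ (ZMod 2) (relIdeal n)).toLinearMap :=
    Submodule.span_le.mpr (Set.range_subset_iff.mpr fun r => Submodule.subset_span ⟨r, rfl⟩)
  rw [← mk_nfLin]
  exact h (nfLin_mem_echelonSpan p)

/-- The monomials `∏_{s ∈ S} x_s^{r_s}` (`r_s ≥ 1`), with `S` ranging over linearly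
independent sets in row echelon form w.r.t. reversed column order (including `S = ∅`,
giving `1`), form an `𝔽₂`-basis of `R_n`.  A monomial is encoded by its exponent
finsupp `r`, whose support is the set `S`. -/
theorem stmt8 (n : ℕ) :
    ∃ b : Module.Basis {r : Vn n →₀ ℕ // Echelon n r.support} (ZMod 2)
        (MvPolynomial (Vn n) (ZMod 2) ⧸ relIdeal n),
      ∀ r : {r : Vn n →₀ ℕ // Echelon n r.support},
        b r = Ideal.Quotient.mk (relIdeal n) (MvPolynomial.monomial r.1 1) :=
  ⟨.mk linearIndependent_mk_monomial top_le_span_mk_monomial, Module.Basis.mk_apply _ _⟩
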